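/- arXiv:1811.01613 — 3 statements merged into one kernel-verified Lean document; each statement's English description precedes it below -/
import Mathlib

section
/- Let α ∈ ℝ and let 0 < θ_min ≤ θ_max be fixed reals. Then there exists a constant C > 0 such that for all θ_1, θ_2 with θ_min ≤ θ_2 ≤ θ_1 ≤ θ_max and all reals S ≥ 0, | θ_1^α e^{−S/θ_1} − θ_2^α e^{−S/θ_2} | ≤ C (θ_1 − θ_2)(S + 1) e^{−S/θ_1}. -/
open Real Set

/-!
Write `E θ = exp (-S / θ)` and split
`θ₁^α E θ₁ - θ₂^α E θ₂ = (θ₁^α - θ₂^α) E θ₁ + θ₂^α (E θ₁ - E θ₂)`.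
On the compact interval `[θmin, θmax]` the power `t ↦ t^α` is Lipschitz and bounded, which
controls the first term by `(θ₁ - θ₂) E θ₁`. For the second, `1 - d ≤ exp (-d)` gives
`E θ₁ - E θ₂ ≤ (S / θ₂ - S / θ₁) E θ₁ ≤ S (θ₁ - θ₂) / θmin² · E θ₁`.
-/

lemma exp_sub_exp_sub_le (u d : ℝ) : exp u - exp (u - d) ≤ d * exp u := by
  have h : 1 - d ≤ exp (-d) := by linarith [add_one_le_exp (-d)]
  rw [sub_eq_add_neg u d, exp_add]
  nlinarith [exp_pos u]

lemma div_sub_div_le_of_le {a θ₁ θ₂ S : ℝ} (ha : 0 < a) (h₂ : a ≤ θ₂) (h₁₂ : θ₂ ≤ θ₁)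
    (hS : 0 ≤ S) : S / θ₂ - S / θ₁ ≤ S * (θ₁ - θ₂) / a ^ 2 := by
  have hθ₂ : 0 < θ₂ := ha.trans_le h₂
  have hθ₁ : 0 < θ₁ := hθ₂.trans_le h₁₂
  calc S / θ₂ - S / θ₁ = S * (θ₁ - θ₂) / (θ₁ * θ₂) := by field_simp
    _ ≤ S * (θ₁ - θ₂) / a ^ 2 := by
      apply div_le_div_of_nonneg_left (by nlinarith) (by positivity)
      nlinarith

lemma exp_neg_div_sub_exp_neg_div_le {a θ₁ θ₂ S : ℝ} (ha : 0 < a) (h₂ : a ≤ θ₂)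
    (h₁₂ : θ₂ ≤ θ₁) (hS : 0 ≤ S) :
    |exp (-S / θ₁) - exp (-S / θ₂)| ≤ S * (θ₁ - θ₂) / a ^ 2 * exp (-S / θ₁) := by
  have hθ₂ : 0 < θ₂ := ha.trans_le h₂
  have hmono : exp (-S / θ₂) ≤ exp (-S / θ₁) := by
    rw [exp_le_exp, neg_div, neg_div, neg_le_neg_iff]
    exact div_le_div_of_nonneg_left hS hθ₂ h₁₂
  have hsplit : -S / θ₂ = -S / θ₁ - (S / θ₂ - S / θ₁) := by ring
  rw [abs_of_nonneg (sub_nonneg.2 hmono), hsplit]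
  exact (exp_sub_exp_sub_le _ _).trans
    (mul_le_mul_of_nonneg_right (div_sub_div_le_of_le ha h₂ h₁₂ hS) (exp_pos _).le)

lemma abs_mul_exp_neg_div_sub_le {f : ℝ → ℝ} {a b M : ℝ} {L : NNReal} (ha : 0 < a)
    (hf : LipschitzOnWith L f (Icc a b)) (hM : ∀ t ∈ Icc a b, |f t| ≤ M)
    {θ₁ θ₂ S : ℝ} (h₂ : a ≤ θ₂) (h₁₂ : θ₂ ≤ θ₁) (h₁ : θ₁ ≤ b) (hS : 0 ≤ S) :
    |f θ₁ * exp (-S / θ₁) - f θ₂ * exp (-S / θ₂)|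
      ≤ (L + M / a ^ 2) * (θ₁ - θ₂) * (S + 1) * exp (-S / θ₁) := by
  have hθ₁ : θ₁ ∈ Icc a b := ⟨h₂.trans h₁₂, h₁⟩
  have hθ₂ : θ₂ ∈ Icc a b := ⟨h₂, h₁₂.trans h₁⟩
  set E₁ := exp (-S / θ₁)
  set E₂ := exp (-S / θ₂)
  have hE₁ : 0 < E₁ := exp_pos _
  have hd : 0 ≤ θ₁ - θ₂ := sub_nonneg.2 h₁₂
  have hM₀ : 0 ≤ M := (abs_nonneg _).trans (hM θ₂ hθ₂)
  have hlip : |f θ₁ - f θ₂| ≤ L * (θ₁ - θ₂) := by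
    simpa [Real.dist_eq, abs_of_nonneg hd] using hf.dist_le_mul θ₁ hθ₁ θ₂ hθ₂
  have hexp := exp_neg_div_sub_exp_neg_div_le ha h₂ h₁₂ hS
  calc |f θ₁ * E₁ - f θ₂ * E₂|
      = |(f θ₁ - f θ₂) * E₁ + f θ₂ * (E₁ - E₂)| := by congr 1; ring
    _ ≤ |f θ₁ - f θ₂| * E₁ + |f θ₂| * |E₁ - E₂| := by
      rw [← abs_of_pos hE₁, ← abs_mul, ← abs_mul, abs_of_pos hE₁]
      exact abs_add_le _ _
    _ ≤ L * (θ₁ - θ₂) * E₁ + M * (S * (θ₁ - θ₂) / a ^ 2 * E₁) := by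
      gcongr
      exact hM θ₂ hθ₂
    _ = (L + M / a ^ 2 * S) * (θ₁ - θ₂) * E₁ := by ring
    _ ≤ (L + M / a ^ 2) * (θ₁ - θ₂) * (S + 1) * E₁ := by
      have : L + M / a ^ 2 * S ≤ (L + M / a ^ 2) * (S + 1) := by
        nlinarith [L.coe_nonneg, div_nonneg hM₀ (sq_nonneg a)]
      nlinarith [mul_nonneg hd hE₁.le]

lemma exists_lipschitzOnWith_rpow_Icc (α : ℝ) {a b : ℝ} (ha : 0 < a) :
    ∃ L, LipschitzOnWith L (fun t : ℝ => t ^ α) (Icc a b) :=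
  ContDiffOn.exists_lipschitzOnWith (n := 1)
    (fun _ ht => (contDiffAt_rpow_const_of_ne (ha.trans_le ht.1).ne').contDiffWithinAt)
    one_ne_zero (convex_Icc a b) isCompact_Icc

theorem stmt_9_general (α θmin θmax : ℝ) (h0 : 0 < θmin) :
    ∃ C : ℝ, 0 < C ∧ ∀ θ1 θ2 : ℝ, θmin ≤ θ2 → θ2 ≤ θ1 → θ1 ≤ θmax → ∀ S : ℝ, 0 ≤ S →
      |θ1 ^ α * Real.exp (-S / θ1) - θ2 ^ α * Real.exp (-S / θ2)|
        ≤ C * (θ1 - θ2) * (S + 1) * Real.exp (-S / θ1) := by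
  obtain ⟨L, hL⟩ := exists_lipschitzOnWith_rpow_Icc α (b := θmax) h0
  obtain ⟨M, hM⟩ := isCompact_Icc.exists_bound_of_continuousOn hL.continuousOn
  refine ⟨L + max M 0 / θmin ^ 2 + 1, by positivity, fun θ1 θ2 h₂ h₁₂ h₁ S hS => ?_⟩
  have hM' : ∀ t ∈ Icc θmin θmax, |t ^ α| ≤ max M 0 :=
    fun t ht => (hM t ht).trans (le_max_left _ _)
  refine (abs_mul_exp_neg_div_sub_le h0 hL hM' h₂ h₁₂ h₁ hS).trans ?_
  gcongr ?_ * _ * _ * _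
  linarith

/-- For `α ∈ ℝ` and `0 < θ_min ≤ θ_max`, there is `C > 0` such that for all
`θ_min ≤ θ_2 ≤ θ_1 ≤ θ_max` and all `S ≥ 0`,
`| θ_1^α e^{−S/θ_1} − θ_2^α e^{−S/θ_2} | ≤ C (θ_1 − θ_2)(S + 1) e^{−S/θ_1}`. -/
theorem stmt_9 (α θmin θmax : ℝ) (h0 : 0 < θmin) (h1 : θmin ≤ θmax) :
    ∃ C : ℝ, 0 < C ∧ ∀ θ1 θ2 : ℝ, θmin ≤ θ2 → θ2 ≤ θ1 → θ1 ≤ θmax → ∀ S : ℝ, 0 ≤ S →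
      |θ1 ^ α * Real.exp (-S / θ1) - θ2 ^ α * Real.exp (-S / θ2)|
        ≤ C * (θ1 - θ2) * (S + 1) * Real.exp (-S / θ1) :=
  stmt_9_general α θmin θmax h0
end

section
/- Let B > 0 be a real number and let c ∈ ℂ with c ≠ 0. Then there exists a constant C > 0 such that for all s ≥ 1, all A ≥ 1, all φ ∈ ℝ, and all z ∈ ℂ with |z| ≤ B, ∫_{−A/s}^{0} |log| c e^{u s + i φ} + z || du ≤ C e^{A} / s. -/
/-!
Put `ρ(u) = ‖c‖ e^{us}`, so that `‖c e^{us+iφ}‖ = ρ(u)`. By the triangle inequality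
`|ρ(u) - ‖z‖| ≤ ‖c e^{us+iφ} + z‖ ≤ ‖c‖ + B` on `[-A/s, 0]`, hence
`|log ‖c e^{us+iφ} + z‖| ≤ log⁺ (‖c‖ + B) + log⁺ |ρ(u) - ‖z‖|⁻¹` away from the single point where
`ρ(u) = ‖z‖`. The first term contributes `log⁺ (‖c‖ + B) · A/s ≤ log⁺ (‖c‖ + B) · e^A/s`.
For the second, substitute `r = ρ(u)`: the Jacobian `ρ'(u) = s ρ(u)` is at least `s ‖c‖ e^{-A}`
on `[-A/s, 0]`, so the integral is at most `e^A/(s ‖c‖) · ∫_ℝ log⁺ |r|⁻¹ dr`, and `log⁺ |r|⁻¹`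
is integrable because `log` is integrable near `0`.
-/


open MeasureTheory Real

theorem Real.abs_log_eq_posLog_add_posLog_inv (x : ℝ) : |log x| = log⁺ x + log⁺ x⁻¹ := by
  rw [posLog_apply, posLog_apply, log_inv]
  rcases le_total 0 (log x) with h | h
  · simp [abs_of_nonneg h, h]
  · simp [abs_of_nonpos h, h]

theorem Real.integrable_posLog_inv : Integrable fun r : ℝ => log⁺ r⁻¹ := by
  have hsupp : (Function.support fun r : ℝ => log⁺ r⁻¹) ⊆ Set.Icc (-1) 1 := by
    intro r hr
    rw [Function.mem_support, ne_eq, posLog_eq_zero_iff, not_le, abs_inv, one_lt_inv_iff₀] at hr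
    exact abs_le.mp hr.2.le
  refine (integrableOn_iff_integrable_of_support_subset hsupp).mp ?_
  have hlog : IntegrableOn log (Set.Icc (-1) 1) :=
    (intervalIntegrable_iff_integrableOn_Icc_of_le (by norm_num)).mp
      intervalIntegral.intervalIntegrable_log'
  refine hlog.norm.mono' (continuous_posLog.measurable.comp measurable_inv).aestronglyMeasurable
    (Filter.Eventually.of_forall fun r => ?_)
  rw [norm_of_nonneg posLog_nonneg, posLog_apply, log_inv, Real.norm_eq_abs]
  exact max_le (abs_nonneg _) (neg_le_abs _)

theorem abs_log_norm_add_le {E : Type*} [SeminormedAddCommGroup E] {p z : E} (h : ‖p‖ ≠ ‖z‖) :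
    |log ‖p + z‖| ≤ log⁺ (‖p‖ + ‖z‖) + log⁺ (‖p‖ - ‖z‖)⁻¹ := by
  have hgap : 0 < |‖p‖ - ‖z‖| := abs_pos.mpr (sub_ne_zero.mpr h)
  have hlow : |‖p‖ - ‖z‖| ≤ ‖p + z‖ := by
    simpa using abs_norm_sub_norm_le p (-z)
  rw [abs_log_eq_posLog_add_posLog_inv, ← posLog_abs (‖p‖ - ‖z‖)⁻¹, abs_inv]
  exact add_le_add (posLog_le_posLog (norm_nonneg _) (norm_add_le p z))
    (posLog_le_posLog (inv_nonneg.mpr (norm_nonneg _)) (inv_anti₀ hgap hlow))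

section ChangeOfVariables

private theorem le_inv_mul_mul_of_le {m d y : ℝ} (hm : 0 < m) (hd : m ≤ d) (hy : 0 ≤ y) :
    y ≤ m⁻¹ * (d * y) := by
  rw [← mul_assoc]
  exact le_mul_of_one_le_left hy ((le_inv_mul_iff₀ hm).mpr (by simpa using hd))

variable {S : Set ℝ} {ψ ψ' f : ℝ → ℝ} {m : ℝ}

theorem integrableOn_comp_of_le_abs_deriv (hS : MeasurableSet S)
    (hψ : ∀ u ∈ S, HasDerivWithinAt ψ (ψ' u) S u) (hinj : S.InjOn ψ) (hm : 0 < m)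
    (hψ' : ∀ u ∈ S, m ≤ |ψ' u|) (hf : Integrable f) (hfm : Measurable f) :
    IntegrableOn (fun u => f (ψ u)) S := by
  have hweighted : IntegrableOn (fun u => |ψ' u| * f (ψ u)) S := by
    simpa only [smul_eq_mul] using
      (integrableOn_image_iff_integrableOn_abs_deriv_smul hS hψ hinj f).mp hf.integrableOn
  have hψm : AEMeasurable ψ (volume.restrict S) :=
    ContinuousOn.aemeasurable (fun u hu => (hψ u hu).continuousWithinAt) hS
  refine (hweighted.norm.const_mul m⁻¹).mono' (hfm.comp_aemeasurable hψm).aestronglyMeasurable ?_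
  refine (ae_restrict_iff' hS).mpr (Filter.Eventually.of_forall fun u hu => ?_)
  rw [norm_mul, Real.norm_eq_abs |ψ' u|, abs_abs]
  exact le_inv_mul_mul_of_le hm (hψ' u hu) (norm_nonneg _)

theorem setIntegral_comp_le_of_le_abs_deriv (hS : MeasurableSet S)
    (hψ : ∀ u ∈ S, HasDerivWithinAt ψ (ψ' u) S u) (hinj : S.InjOn ψ) (hm : 0 < m)
    (hψ' : ∀ u ∈ S, m ≤ |ψ' u|) (hf : Integrable f) (hf0 : 0 ≤ f) :
    ∫ u in S, f (ψ u) ≤ m⁻¹ * ∫ r, f r := by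
  have hweighted : IntegrableOn (fun u => |ψ' u| * f (ψ u)) S := by
    simpa only [smul_eq_mul] using
      (integrableOn_image_iff_integrableOn_abs_deriv_smul hS hψ hinj f).mp hf.integrableOn
  calc ∫ u in S, f (ψ u) ≤ ∫ u in S, m⁻¹ * (|ψ' u| * f (ψ u)) := by
        refine integral_mono_of_nonneg (Filter.Eventually.of_forall fun u => hf0 (ψ u))
          (hweighted.const_mul _) ((ae_restrict_iff' hS).mpr (Filter.Eventually.of_forall ?_))
        exact fun u hu => le_inv_mul_mul_of_le hm (hψ' u hu) (hf0 (ψ u))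
    _ = m⁻¹ * ∫ r in ψ '' S, f r := by
        rw [integral_const_mul, integral_image_eq_integral_abs_deriv_smul hS hψ hinj]
        simp only [smul_eq_mul]
    _ ≤ m⁻¹ * ∫ r, f r :=
        mul_le_mul_of_nonneg_left
          (setIntegral_le_integral hf (Filter.Eventually.of_forall hf0)) (inv_nonneg.mpr hm.le)

end ChangeOfVariables

section ExpSubstitution

variable {f : ℝ → ℝ} {S : Set ℝ} {a s A : ℝ}

theorem integrableOn_comp_const_mul_exp_and_setIntegral_le (hS : MeasurableSet S)
    (hSA : S ⊆ Set.Ici (-A / s)) (ha : 0 < a) (hs : 0 < s)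
    (hf : Integrable f) (hfm : Measurable f) (hf0 : 0 ≤ f) :
    IntegrableOn (fun u => f (a * exp (u * s))) S ∧
      ∫ u in S, f (a * exp (u * s)) ≤ exp A / (a * s) * ∫ r, f r := by
  have hψ : ∀ u ∈ S, HasDerivWithinAt (fun u => a * exp (u * s)) (a * exp (u * s) * s) S u :=
    fun u _ => by simpa [mul_assoc] using ((hasDerivAt_mul_const s).exp.const_mul a).hasDerivWithinAt
  have hinj : S.InjOn fun u => a * exp (u * s) := fun x _ y _ hxy => by
    simpa [ha.ne', hs.ne'] using hxy
  have hm : 0 < a * s * exp (-A) := by positivity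
  have hψ' : ∀ u ∈ S, a * s * exp (-A) ≤ |a * exp (u * s) * s| := fun u hu => by
    have : -A ≤ u * s := by simpa [div_le_iff₀ hs] using hSA hu
    rw [abs_of_pos (by positivity)]
    calc a * s * exp (-A) ≤ a * s * exp (u * s) := by gcongr
      _ = a * exp (u * s) * s := by ring
  refine ⟨integrableOn_comp_of_le_abs_deriv hS hψ hinj hm hψ' hf hfm, ?_⟩
  convert setIntegral_comp_le_of_le_abs_deriv hS hψ hinj hm hψ' hf hf0 using 2
  rw [exp_neg]
  field_simp

end ExpSubstitution

theorem ae_const_mul_exp_mul_ne {a s : ℝ} (ha : a ≠ 0) (hs : s ≠ 0) (t : ℝ) :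
    ∀ᵐ u : ℝ, a * exp (u * s) ≠ t := by
  refine measure_eq_zero_iff_ae_notMem.mp (Set.Subsingleton.measure_zero ?_ _)
  intro x hx y hy
  simpa [ha, hs] using hx.trans hy.symm

theorem abs_log_norm_mul_exp_add_le {c z : ℂ} {B t φ : ℝ} (hz : ‖z‖ ≤ B) (ht : t ≤ 0)
    (hne : ‖c‖ * exp t ≠ ‖z‖) :
    |log ‖c * Complex.exp (t + φ * Complex.I) + z‖|
      ≤ log⁺ (‖c‖ + B) + log⁺ (‖c‖ * exp t - ‖z‖)⁻¹ := by
  have hnorm : ‖c * Complex.exp (t + φ * Complex.I)‖ = ‖c‖ * exp t := by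
    simp [Complex.norm_exp]
  have hexp : exp t ≤ 1 := exp_le_one_iff.mpr ht
  calc _ ≤ _ := abs_log_norm_add_le (hnorm ▸ hne)
    _ ≤ log⁺ (‖c‖ + B) + log⁺ (‖c‖ * exp t - ‖z‖)⁻¹ := by
      rw [hnorm]
      refine add_le_add_left (posLog_le_posLog (by positivity) ?_) _
      nlinarith [norm_nonneg c]

theorem stmt_10_general (B : ℝ) (c : ℂ) (hc : c ≠ 0) :
    ∃ C : ℝ, 0 < C ∧ ∀ s : ℝ, 1 ≤ s → ∀ A : ℝ, 1 ≤ A → ∀ φ : ℝ, ∀ z : ℂ,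
      ‖z‖ ≤ B →
      (∫ u in Set.Icc (-A / s) (0 : ℝ),
        |Real.log ‖c * Complex.exp (((u * s : ℝ) : ℂ)
          + (φ : ℂ) * Complex.I) + z‖|)
      ≤ C * Real.exp A / s := by
  set a := ‖c‖
  have ha : 0 < a := norm_pos_iff.mpr hc
  set K := log⁺ (a + B)
  set J := ∫ r, log⁺ r⁻¹
  have hK : 0 ≤ K := posLog_nonneg
  have hJ : 0 ≤ J := integral_nonneg fun _ => posLog_nonneg
  refine ⟨K + J / a + 1, by positivity, fun s hs A hA φ z hz => ?_⟩
  have hs0 : 0 < s := by linarith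
  set S := Set.Icc (-A / s) 0
  set g := fun u => log⁺ (a * exp (u * s) - ‖z‖)⁻¹
  obtain ⟨hg, hgJ⟩ := integrableOn_comp_const_mul_exp_and_setIntegral_le
    (f := fun r => log⁺ (r - ‖z‖)⁻¹) (S := S) measurableSet_Icc Set.Icc_subset_Ici_self ha hs0
    (integrable_posLog_inv.comp_sub_right _)
    (continuous_posLog.measurable.comp ((measurable_id.sub_const _).inv)) (fun _ => posLog_nonneg)
  rw [integral_sub_right_eq_self (fun r => log⁺ r⁻¹)] at hgJ
  have hbound : ∀ᵐ u ∂volume.restrict S,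
      |log ‖c * Complex.exp (((u * s : ℝ) : ℂ) + (φ : ℂ) * Complex.I) + z‖| ≤ K + g u := by
    filter_upwards [ae_restrict_mem measurableSet_Icc,
      ae_restrict_of_ae (ae_const_mul_exp_mul_ne ha.ne' hs0.ne' ‖z‖)] with u hu hne
    exact abs_log_norm_mul_exp_add_le hz (mul_nonpos_of_nonpos_of_nonneg hu.2 hs0.le) hne
  have hvol : volume.real S = A / s := by
    rw [Real.volume_real_Icc, zero_sub, neg_div, neg_neg, max_eq_left (by positivity)]
  calc _ ≤ ∫ u in S, (K + g u) :=
        integral_mono_of_nonneg (Filter.Eventually.of_forall fun _ => abs_nonneg _)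
          ((integrable_const K).add hg) hbound
    _ = K * (A / s) + ∫ u in S, g u := by
        rw [integral_add (integrable_const K) hg, setIntegral_const, hvol, smul_eq_mul, mul_comm]
    _ ≤ K * (exp A / s) + J / a * (exp A / s) := by
        rw [show J / a * (exp A / s) = exp A / (a * s) * J by field_simp]
        gcongr
        linarith [add_one_le_exp A]
    _ ≤ (K + J / a + 1) * exp A / s := by
        have : 0 ≤ exp A / s := by positivity
        linarith [show (K + J / a + 1) * exp A / s
          = K * (exp A / s) + J / a * (exp A / s) + exp A / s by ring]

/-- Let `B > 0` and `c ∈ ℂ` with `c ≠ 0`. Then there is `C > 0` such that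
for all `s ≥ 1`, `A ≥ 1`, `φ ∈ ℝ` and `z ∈ ℂ` with `|z| ≤ B`,
`∫_{−A/s}^{0} |log| c e^{u s + i φ} + z || du ≤ C e^{A} / s`. -/
theorem stmt_10 (B : ℝ) (hB : 0 < B) (c : ℂ) (hc : c ≠ 0) :
    ∃ C : ℝ, 0 < C ∧ ∀ s : ℝ, 1 ≤ s → ∀ A : ℝ, 1 ≤ A → ∀ φ : ℝ, ∀ z : ℂ,
      ‖z‖ ≤ B →
      (∫ u in Set.Icc (-A / s) (0 : ℝ),
        |Real.log ‖c * Complex.exp (((u * s : ℝ) : ℂ)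
          + (φ : ℂ) * Complex.I) + z‖|)
      ≤ C * Real.exp A / s :=
  stmt_10_general B c hc
end

section
/- Let J ≥ 2 be an integer, let b_1, …, b_J ∈ ℂ be nonzero, let ξ_1, …, ξ_J > 0 be reals, and let m, n ∈ ℕ^J. Then there exists a constant C > 0 such that for all s > 0 and all A > 0 satisfying ∑_{j=2}^J |b_j/b_1| e^{−A} ≤ 1/2, one has | ∫_{ℝ^J} ∫_{R_{1,∅}(A,s)} log|1 + ∑_{j=2}^J (b_j/b_1) e^{(u_j − u_1 + i(v_j − v_1)) s}| · e^{−∑_{j=1}^J (u_j² + v_j²)/ξ_j} u^m v^n du dv | ≤ C e^{−A}, where R_{1,∅}(A,s) := {u = (u_1,…,u_J) ∈ ℝ^J : u_j − u_1 ≤ −A/s for all j = 2,…,J}. -/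
open MeasureTheory Real

/-!
On the region `u_j - u_1 ≤ -A/s` every exponential in the sum has modulus at most `e^{-A}`, so
the argument of the logarithm is `1 + z` with `‖z‖ ≤ B e^{-A} ≤ 1/2`, `B = ∑ |b_j/b_1|`, and
`|log ‖1 + z‖| ≤ 2‖z‖`. The logarithm is therefore bounded by `2 B e^{-A}` on the region, and
what remains is the absolute Gaussian moment `∫ |u^m| |v^n| e^{-∑ (u_j² + v_j²)/ξ_j}`, which is
finite and independent of `s` and `A`.
-/

lemma Complex.abs_log_norm_one_add_le {z : ℂ} (hz : ‖z‖ ≤ 1 / 2) :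
    |Real.log ‖1 + z‖| ≤ 2 * ‖z‖ := by
  rw [← Complex.log_re]
  calc |(Complex.log (1 + z)).re| ≤ ‖Complex.log (1 + z)‖ := Complex.abs_re_le_norm _
    _ ≤ 3 / 2 * ‖z‖ := Complex.norm_log_one_add_half_le_self hz
    _ ≤ 2 * ‖z‖ := by linarith [norm_nonneg z]

lemma norm_sum_mul_exp_le {ι : Type*} (s : Finset ι) (a w : ι → ℂ) {r : ℝ}
    (hw : ∀ j ∈ s, (w j).re ≤ r) :
    ‖∑ j ∈ s, a j * Complex.exp (w j)‖ ≤ (∑ j ∈ s, ‖a j‖) * Real.exp r := by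
  rw [Finset.sum_mul]
  refine (norm_sum_le _ _).trans (Finset.sum_le_sum fun j hj => ?_)
  rw [norm_mul, Complex.norm_exp]
  gcongr
  exact hw j hj

lemma integrable_abs_pow_mul_exp_neg_sq_div {c : ℝ} (hc : 0 < c) (p : ℕ) :
    Integrable fun t : ℝ => |t| ^ p * Real.exp (-(t ^ 2 / c)) := by
  refine (integrable_rpow_mul_exp_neg_mul_sq (inv_pos.2 hc)
    (by linarith [p.cast_nonneg (α := ℝ)] : (-1 : ℝ) < p)).abs.congr
    (Filter.Eventually.of_forall fun t => ?_)
  simp only [Real.rpow_natCast, abs_mul, abs_pow, abs_of_pos (Real.exp_pos _)]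
  congr 3
  field_simp

noncomputable def gaussMomentDensity {ι : Type*} [Fintype ι] (ξ : ι → ℝ) (p : ι → ℕ)
    (x : ι → ℝ) : ℝ :=
  ∏ j, |x j| ^ p j * Real.exp (-(x j ^ 2 / ξ j))

section GaussMomentDensity

variable {ι : Type*} [Fintype ι] (ξ : ι → ℝ)

lemma gaussMomentDensity_nonneg (p : ι → ℕ) (x : ι → ℝ) : 0 ≤ gaussMomentDensity ξ p x :=
  Finset.prod_nonneg fun _ _ => by positivity

lemma integrable_gaussMomentDensity (hξ : ∀ j, 0 < ξ j) (p : ι → ℕ) :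
    Integrable (gaussMomentDensity ξ p) :=
  Integrable.fintype_prod (f := fun j t => |t| ^ p j * Real.exp (-(t ^ 2 / ξ j)))
    fun j => integrable_abs_pow_mul_exp_neg_sq_div (hξ j) (p j)

lemma exp_neg_sum_mul_abs_prod_pow (m n : ι → ℕ) (u v : ι → ℝ) :
    Real.exp (-(∑ j, (u j ^ 2 + v j ^ 2) / ξ j)) * |∏ j, u j ^ m j| * |∏ j, v j ^ n j|
      = gaussMomentDensity ξ m u * gaussMomentDensity ξ n v := by
  simp only [gaussMomentDensity, Finset.prod_mul_distrib, Finset.abs_prod, abs_pow, add_div,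
    neg_add, Finset.sum_add_distrib, ← Finset.sum_neg_distrib, Real.exp_add, Real.exp_sum]
  ring

lemma abs_log_norm_one_add_mul_gauss_le (m n : ι → ℕ) {z : ℂ} {ε : ℝ} (hz : ‖z‖ ≤ ε)
    (hε : ε ≤ 1 / 2) (u v : ι → ℝ) :
    |Real.log ‖1 + z‖ * Real.exp (-(∑ j, (u j ^ 2 + v j ^ 2) / ξ j))
        * (∏ j, u j ^ m j) * (∏ j, v j ^ n j)|
      ≤ 2 * ε * gaussMomentDensity ξ n v * gaussMomentDensity ξ m u := by
  have hlog : |Real.log ‖1 + z‖| ≤ 2 * ε := by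
    linarith [Complex.abs_log_norm_one_add_le (hz.trans hε)]
  rw [abs_mul, abs_mul, abs_mul, abs_of_pos (Real.exp_pos _), mul_assoc, mul_assoc,
    ← mul_assoc (Real.exp _), exp_neg_sum_mul_abs_prod_pow]
  calc |Real.log ‖1 + z‖| * (gaussMomentDensity ξ m u * gaussMomentDensity ξ n v)
      ≤ 2 * ε * (gaussMomentDensity ξ m u * gaussMomentDensity ξ n v) := by
        gcongr
        exact mul_nonneg (gaussMomentDensity_nonneg ξ m u) (gaussMomentDensity_nonneg ξ n v)
    _ = _ := by ring

end GaussMomentDensity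

lemma abs_integral_setIntegral_le_of_abs_le_mul {α β : Type*} [MeasurableSpace α]
    [MeasurableSpace β] {μ : Measure α} {ν : Measure β} {f : α → β → ℝ} {g : α → ℝ}
    {h : β → ℝ} {S : Set β} (hS : MeasurableSet S) {c : ℝ} (hc : 0 ≤ c)
    (hg : Integrable g μ) (hh : Integrable h ν) (hg₀ : ∀ v, 0 ≤ g v) (hh₀ : ∀ u, 0 ≤ h u)
    (hf : ∀ v, ∀ u ∈ S, |f v u| ≤ c * g v * h u) :
    |∫ v, ∫ u in S, f v u ∂ν ∂μ| ≤ c * (∫ v, g v ∂μ) * ∫ u, h u ∂ν := by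
  simp only [← Real.norm_eq_abs] at hf ⊢
  have inner : ∀ v, ‖∫ u in S, f v u ∂ν‖ ≤ c * (∫ u, h u ∂ν) * g v := fun v => calc
    ‖∫ u in S, f v u ∂ν‖ ≤ ∫ u in S, c * g v * h u ∂ν :=
        norm_integral_le_of_norm_le (hh.const_mul _).integrableOn
          (ae_restrict_of_forall_mem hS (hf v))
    _ ≤ ∫ u, c * g v * h u ∂ν :=
        setIntegral_le_integral (hh.const_mul _)
          (Filter.Eventually.of_forall fun u => by have := hg₀ v; have := hh₀ u; positivity)
    _ = c * (∫ u, h u ∂ν) * g v := by rw [integral_const_mul]; ring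
  calc ‖∫ v, ∫ u in S, f v u ∂ν ∂μ‖ ≤ ∫ v, c * (∫ u, h u ∂ν) * g v ∂μ :=
        norm_integral_le_of_norm_le (hg.const_mul _) (Filter.Eventually.of_forall inner)
    _ = c * (∫ v, g v ∂μ) * ∫ u, h u ∂ν := by rw [integral_const_mul]; ring

theorem stmt_11_general (J : ℕ) (b : Fin (J + 2) → ℂ)
    (ξ : Fin (J + 2) → ℝ) (hξ : ∀ j, 0 < ξ j) (m n : Fin (J + 2) → ℕ) :
    ∃ C : ℝ, 0 < C ∧ ∀ s : ℝ, 0 < s → ∀ A : ℝ, 0 < A →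
      (∑ j ∈ Finset.univ.erase (0 : Fin (J + 2)), ‖b j / b 0‖)
          * Real.exp (-A) ≤ 1 / 2 →
      |∫ v : Fin (J + 2) → ℝ,
        ∫ u in {u : Fin (J + 2) → ℝ | ∀ j, j ≠ 0 → u j - u 0 ≤ -A / s},
          Real.log (‖1 + ∑ j ∈ Finset.univ.erase (0 : Fin (J + 2)),
              (b j / b 0) * Complex.exp ((((u j - u 0 : ℝ) : ℂ)
                + ((v j - v 0 : ℝ) : ℂ) * Complex.I) * (s : ℂ))‖)
            * Real.exp (-(∑ j, ((u j) ^ 2 + (v j) ^ 2) / ξ j))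
            * (∏ j, u j ^ m j) * (∏ j, v j ^ n j)|
      ≤ C * Real.exp (-A) := by
  set B := ∑ j ∈ Finset.univ.erase (0 : Fin (J + 2)), ‖b j / b 0‖
  have hB : 0 ≤ B := Finset.sum_nonneg fun _ _ => norm_nonneg _
  set Gm := ∫ u, gaussMomentDensity ξ m u
  set Gn := ∫ v, gaussMomentDensity ξ n v
  have hGm : 0 ≤ Gm := integral_nonneg (gaussMomentDensity_nonneg ξ m)
  have hGn : 0 ≤ Gn := integral_nonneg (gaussMomentDensity_nonneg ξ n)
  refine ⟨2 * B * Gn * Gm + 1, by positivity, fun s hs A _ hsmall => ?_⟩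
  have hS : MeasurableSet {u : Fin (J + 2) → ℝ | ∀ j, j ≠ 0 → u j - u 0 ≤ -A / s} := by
    simp only [Set.ofPred_forall]
    exact .iInter fun j => .iInter fun _ =>
      measurableSet_le ((measurable_pi_apply j).sub (measurable_pi_apply 0)) measurable_const
  calc _ ≤ 2 * (B * Real.exp (-A)) * Gn * Gm :=
        abs_integral_setIntegral_le_of_abs_le_mul hS (by positivity)
          (integrable_gaussMomentDensity ξ hξ n) (integrable_gaussMomentDensity ξ hξ m)
          (gaussMomentDensity_nonneg ξ n) (gaussMomentDensity_nonneg ξ m) fun v u hu =>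
          abs_log_norm_one_add_mul_gauss_le ξ m n
            (norm_sum_mul_exp_le _ _ _ fun j hj => by
              simpa [Complex.mul_re] using (le_div_iff₀ hs).1 (hu j (Finset.ne_of_mem_erase hj)))
            hsmall u v
    _ ≤ (2 * B * Gn * Gm + 1) * Real.exp (-A) := by nlinarith [Real.exp_pos (-A)]

/-- Let `J ≥ 2` (here the number of summands is `J + 2` with `J : ℕ`
arbitrary, and the distinguished index "1" is `0 : Fin (J + 2)`), let the `b_j` be
nonzero, `ξ_j > 0`, and `m, n ∈ ℕ^J`. Then there is `C > 0` such that for all `s > 0`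
and `A > 0` with `∑_{j≠1} |b_j/b_1| e^{−A} ≤ 1/2`,
`| ∫_{ℝ^J} ∫_{R_{1,∅}(A,s)} log|1 + ∑_{j≠1} (b_j/b_1) e^{(u_j − u_1 + i(v_j − v_1)) s}|
   · e^{−∑ (u_j² + v_j²)/ξ_j} u^m v^n du dv | ≤ C e^{−A}`,
where `R_{1,∅}(A,s) := {u : u_j − u_1 ≤ −A/s for all j ≠ 1}`. -/
theorem stmt_11 (J : ℕ) (b : Fin (J + 2) → ℂ) (hb : ∀ j, b j ≠ 0)
    (ξ : Fin (J + 2) → ℝ) (hξ : ∀ j, 0 < ξ j) (m n : Fin (J + 2) → ℕ) :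
    ∃ C : ℝ, 0 < C ∧ ∀ s : ℝ, 0 < s → ∀ A : ℝ, 0 < A →
      (∑ j ∈ Finset.univ.erase (0 : Fin (J + 2)), ‖b j / b 0‖)
          * Real.exp (-A) ≤ 1 / 2 →
      |∫ v : Fin (J + 2) → ℝ,
        ∫ u in {u : Fin (J + 2) → ℝ | ∀ j, j ≠ 0 → u j - u 0 ≤ -A / s},
          Real.log (‖1 + ∑ j ∈ Finset.univ.erase (0 : Fin (J + 2)),
              (b j / b 0) * Complex.exp ((((u j - u 0 : ℝ) : ℂ)
                + ((v j - v 0 : ℝ) : ℂ) * Complex.I) * (s : ℂ))‖)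
            * Real.exp (-(∑ j, ((u j) ^ 2 + (v j) ^ 2) / ξ j))
            * (∏ j, u j ^ m j) * (∏ j, v j ^ n j)|
      ≤ C * Real.exp (-A) :=
  stmt_11_general J b ξ hξ m n
end
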